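/- arXiv:2510.01301 — 6 statements merged into one kernel-verified Lean document; each statement's English description precedes it below -/
import Mathlib

section
/- Fix p ∈ (0,1) and let A be a Bernoulli(p) random subset of ℕ. Then with probability 1 the following holds: for every integer L ≥ 1 there exist natural numbers x_1 < x_2 < ⋯ < x_L such that FS(x_1,…,x_L) ⊆ A. That is, almost surely A contains finite sumsets of every finite length. -/
/-!
Fix `L` and put `M = 2 ^ L`. For every `j`, the `M - 1` numbers `M ^ j * m` with `1 ≤ m < M`
(the base-`M` numerals with a single nonzero digit, in position `j`) contain the finite sumset of
`M ^ j, 2 * M ^ j, …, 2 ^ (L - 1) * M ^ j`, since binary sums of distinct powers `2 ^ i < M` are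
the numbers `1 ≤ m < M`. These blocks are pairwise disjoint, so the events "block `j` lies in
`A`" are independent, each of probability `p ^ (M - 1) > 0`; by the second Borel–Cantelli lemma
almost surely one of them occurs.
-/

open MeasureTheory ProbabilityTheory

/-- The finite sumset of `x : Fin L → ℕ`: all sums over nonempty subsets of indices. -/
def FS {L : ℕ} (x : Fin L → ℕ) : Set ℕ :=
  {s | ∃ F : Finset (Fin L), F.Nonempty ∧ s = ∑ i ∈ F, x i}

open Finset Filter Function
open scoped ENNReal

section Independence

variable {Ω ι : Type*} [MeasurableSpace Ω] {μ : Measure Ω}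

lemma ProbabilityTheory.iIndepFun.iIndepSet_preimage {β : Type*} [MeasurableSpace β]
    {f : ι → Ω → β} (hf : iIndepFun f μ) (hmeas : ∀ i, Measurable (f i)) {S : ι → Set β}
    (hS : ∀ i, MeasurableSet (S i)) : iIndepSet (fun i ↦ f i ⁻¹' S i) μ :=
  (iIndepSet_iff_meas_biInter fun i ↦ hmeas i (hS i)).2 fun _ ↦
    hf.meas_biInter fun i _ ↦ ⟨S i, hS i, rfl⟩

lemma ProbabilityTheory.iIndepSet.iIndepSet_biInter {κ : Type*} {T : ι → Set Ω}
    (hT : ∀ i, MeasurableSet (T i)) (h : iIndepSet T μ) {B : κ → Finset ι}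
    (hB : Pairwise (Disjoint on B)) : iIndepSet (fun j ↦ ⋂ i ∈ B j, T i) μ := by
  classical
  refine (iIndepSet_iff_meas_biInter fun j ↦ (B j).measurableSet_biInter fun i _ ↦ hT i).2
    fun t ↦ ?_
  rw [← set_biInter_biUnion, h.meas_biInter, prod_biUnion (hB.set_pairwise _)]
  exact prod_congr rfl fun j _ ↦ (h.meas_biInter _).symm

lemma ae_frequently_mem_of_iIndepSet {s : ℕ → Set Ω} (hs : ∀ n, MeasurableSet (s n))
    (h : iIndepSet s μ) (hsum : ∑' n, μ (s n) = ∞) : ∀ᵐ ω ∂μ, ∃ᶠ n in atTop, ω ∈ s n := by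
  have := h.isProbabilityMeasure
  have hlimsup := measure_limsup_eq_one hs h hsum
  rw [← measure_univ (μ := μ),
    ← ae_mem_iff_measure_eq (MeasurableSet.measurableSet_limsup hs).nullMeasurableSet] at hlimsup
  simpa only [mem_limsup_iff_frequently_mem] using hlimsup

lemma ae_frequently_forall_mem_of_iIndepSet {T : ι → Set Ω} (hT : ∀ i, MeasurableSet (T i))
    (h : iIndepSet T μ) {c : ℝ≥0∞} (hc : c ≠ 0) (hμ : ∀ i, μ (T i) = c) {B : ℕ → Finset ι}
    (hB : Pairwise (Disjoint on B)) {k : ℕ} (hk : ∀ j, #(B j) = k) :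
    ∀ᵐ ω ∂μ, ∃ᶠ j in atTop, ∀ i ∈ B j, ω ∈ T i := by
  have hblock (j : ℕ) : μ (⋂ i ∈ B j, T i) = c ^ k := by
    rw [h.meas_biInter, prod_congr rfl fun i _ ↦ hμ i, prod_const, hk]
  have hsum : ∑' j, μ (⋂ i ∈ B j, T i) = ∞ := by
    simpa only [hblock] using ENNReal.tsum_const_eq_top_of_ne_zero (pow_ne_zero k hc)
  filter_upwards [ae_frequently_mem_of_iIndepSet (fun j ↦ (B j).measurableSet_biInter
    fun i _ ↦ hT i) (h.iIndepSet_biInter hT hB) hsum] with ω hω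
  simpa only [Set.mem_iInter] using hω

end Independence

def singleDigitNumbers (b j : ℕ) : Finset ℕ :=
  (Ico 1 b).image (b ^ j * ·)

lemma card_singleDigitNumbers {b : ℕ} (hb : 0 < b) (j : ℕ) :
    #(singleDigitNumbers b j) = b - 1 := by
  rw [singleDigitNumbers, card_image_of_injective _ (mul_right_injective₀ (pow_pos hb j).ne'),
    Nat.card_Ico]

lemma log_of_mem_singleDigitNumbers {b j n : ℕ} (hn : n ∈ singleDigitNumbers b j) :
    Nat.log b n = j := by
  obtain ⟨m, hm, rfl⟩ := mem_image.1 hn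
  obtain ⟨hm1, hmb⟩ := mem_Ico.1 hm
  refine Nat.log_eq_of_pow_le_of_lt_pow (Nat.le_mul_of_pos_right _ hm1) ?_
  rw [pow_succ]
  exact Nat.mul_lt_mul_of_pos_left hmb (pow_pos (Nat.zero_lt_of_lt hmb) j)

lemma pairwise_disjoint_singleDigitNumbers (b : ℕ) :
    Pairwise (Disjoint on singleDigitNumbers b) := fun _ _ hij ↦
  disjoint_left.2 fun _ hi hj ↦
    hij ((log_of_mem_singleDigitNumbers hi).symm.trans (log_of_mem_singleDigitNumbers hj))

lemma sum_two_pow_mem_Ico {L : ℕ} {F : Finset (Fin L)} (hF : F.Nonempty) :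
    ∑ i ∈ F, 2 ^ (i : ℕ) ∈ Ico 1 (2 ^ L) := by
  obtain ⟨i, hi⟩ := hF
  refine mem_Ico.2 ⟨Nat.one_le_two_pow.trans
    (single_le_sum (f := fun i : Fin L ↦ 2 ^ (i : ℕ)) (fun _ _ ↦ Nat.zero_le _) hi), ?_⟩
  have hlt := Nat.geomSum_lt le_rfl (s := F.map Fin.valEmbedding) (n := L) fun k hk ↦ by
    obtain ⟨i, -, rfl⟩ := mem_map.1 hk
    exact i.isLt
  rwa [sum_map] at hlt

lemma FS_pow_mul_two_pow_subset (L j : ℕ) :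
    FS (fun i : Fin L ↦ (2 ^ L) ^ j * 2 ^ (i : ℕ)) ⊆ singleDigitNumbers (2 ^ L) j := by
  rintro _ ⟨F, hF, rfl⟩
  rw [← mul_sum]
  exact mem_image_of_mem _ (sum_two_pow_mem_Ico hF)

/-- **Random Finite Sumsets.** For a Bernoulli(`p`) random subset `A(ω) = {n | ε n ω = true}`
of `ℕ`, almost surely, for every `L ≥ 1` there are `x₁ < ⋯ < x_L` with
`FS(x₁,…,x_L) ⊆ A(ω)`. -/
theorem random_finite_sumsets {Ω : Type*} [MeasurableSpace Ω]
    (μ : Measure Ω) [IsProbabilityMeasure μ]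
    (p : ℝ) (hp : p ∈ Set.Ioo (0 : ℝ) 1)
    (ε : ℕ → Ω → Bool) (hmeas : ∀ n, Measurable (ε n))
    (hindep : iIndepFun ε μ)
    (hbern : ∀ n, μ {ω | ε n ω = true} = ENNReal.ofReal p) :
    ∀ᵐ ω ∂μ, ∀ L : ℕ, 1 ≤ L →
      ∃ x : Fin L → ℕ, StrictMono x ∧ FS x ⊆ {n | ε n ω = true} := by
  refine ae_all_iff.2 fun L ↦ ?_
  have hM : 0 < 2 ^ L := by positivity
  have htrue : MeasurableSet {true} := measurableSet_singleton true
  have hblock := ae_frequently_forall_mem_of_iIndepSet (fun n ↦ hmeas n htrue)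
    (hindep.iIndepSet_preimage hmeas fun _ ↦ htrue) (ENNReal.ofReal_pos.2 hp.1).ne' hbern
    (pairwise_disjoint_singleDigitNumbers (2 ^ L)) (card_singleDigitNumbers hM)
  filter_upwards [hblock] with ω hω _
  obtain ⟨j, hj⟩ := hω.exists
  refine ⟨fun i ↦ (2 ^ L) ^ j * 2 ^ (i : ℕ), ?_,
    fun n hn ↦ hj n (FS_pow_mul_two_pow_subset L j hn)⟩
  exact ((pow_right_strictMono₀ one_lt_two).comp Fin.val_strictMono).const_mul (pow_pos hM j)
end

section
/- Fix p ∈ (0,1) and let A be a Bernoulli(p) random subset of ℕ. Then with probability 1 the following holds: for every integer L ≥ 1 there exist natural numbers x_1 < x_2 < ⋯ < x_L such that FP(x_1,…,x_L) ⊆ A. That is, almost surely A contains finite product sets of every finite length. -/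
/-!
Fix `L`. For every `k`, the numbers `x_i = 2 ^ 2 ^ (L * k + i)`, `i < L`, have all their finite
products in the block `{2 ^ (2 ^ (L * k) * m) : 1 ≤ m < 2 ^ L}` (the product over `F` has
`m = ∑ i ∈ F, 2 ^ i`). These blocks are pairwise disjoint and have `2 ^ L - 1` elements each, so
the events "the `k`-th block lies in `A`" are independent with the same positive probability
`p ^ (2 ^ L - 1)`. By the second Borel–Cantelli lemma, almost surely one of them occurs.
-/

open MeasureTheory ProbabilityTheory

/-- The finite product set of `x : Fin L → ℕ`: all products over nonempty subsets of indices. -/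
def FP {L : ℕ} (x : Fin L → ℕ) : Set ℕ :=
  {s | ∃ F : Finset (Fin L), F.Nonempty ∧ s = ∏ i ∈ F, x i}

open Filter Finset Function
open scoped ENNReal

namespace ProbabilityTheory

variable {Ω ι : Type*} [MeasurableSpace Ω] {μ : Measure Ω}

lemma iIndepFun.iIndepSet_preimage_s1 {β : Type*} [MeasurableSpace β] {X : ι → Ω → β}
    (hX : iIndepFun X μ) (hXm : ∀ i, Measurable (X i)) {t : Set β} (ht : MeasurableSet t) :
    iIndepSet (fun i ↦ X i ⁻¹' t) μ := by
  rw [iIndepSet_iff_meas_biInter fun i ↦ hXm i ht]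
  exact fun S ↦ hX.meas_biInter fun i _ ↦ ⟨t, ht, rfl⟩

lemma iIndepSet.measure_biInter_eq_pow {s : ι → Set Ω} (hs : iIndepSet s μ) {q : ℝ≥0∞}
    (hq : ∀ i, μ (s i) = q) (T : Finset ι) : μ (⋂ i ∈ T, s i) = q ^ #T := by
  rw [hs.meas_biInter, prod_congr rfl fun i _ ↦ hq i, prod_const]

lemma iIndepSet.biInter_of_pairwise_disjoint {κ : Type*} {s : ι → Set Ω} (hs : iIndepSet s μ)
    (hsm : ∀ i, MeasurableSet (s i)) {S : κ → Finset ι} (hS : Pairwise (Disjoint on S)) :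
    iIndepSet (fun k ↦ ⋂ i ∈ S k, s i) μ := by
  classical
  rw [iIndepSet_iff_meas_biInter fun k ↦ (S k).measurableSet_biInter fun i _ ↦ hsm i]
  intro K
  rw [← set_biInter_biUnion, hs.meas_biInter, prod_biUnion (hS.set_pairwise _)]
  exact prod_congr rfl fun k _ ↦ (hs.meas_biInter _).symm

lemma ae_frequently_mem_of_iIndepSet {s : ℕ → Set Ω} (hsm : ∀ n, MeasurableSet (s n))
    (hs : iIndepSet s μ) {c : ℝ≥0∞} (hc : c ≠ 0) (hle : ∀ n, c ≤ μ (s n)) :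
    ∀ᵐ ω ∂μ, ∃ᶠ n in atTop, ω ∈ s n := by
  have : IsProbabilityMeasure μ := hs.isProbabilityMeasure
  have hsum : ∑' n, μ (s n) = ∞ :=
    top_le_iff.1 <|
      (ENNReal.tsum_const_eq_top_of_ne_zero hc).symm.le.trans (ENNReal.tsum_le_tsum hle)
  have hlimsup := measure_limsup_eq_one hsm hs hsum
  rw [← measure_univ (μ := μ), ← ae_mem_iff_measure_eq
    (MeasurableSet.measurableSet_limsup hsm).nullMeasurableSet] at hlimsup
  filter_upwards [hlimsup] with ω hω using mem_limsup_iff_frequently_mem.1 hω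

end ProbabilityTheory

section Blocks

def productBlock (L k : ℕ) : Finset ℕ :=
  (Ico 1 (2 ^ L)).image fun m ↦ 2 ^ (2 ^ (L * k) * m)

def blockGenerator (L k : ℕ) (i : Fin L) : ℕ :=
  2 ^ 2 ^ (L * k + i)

variable (L k : ℕ)

lemma card_productBlock : #(productBlock L k) = 2 ^ L - 1 := by
  rw [productBlock, card_image_of_injective, Nat.card_Ico]
  exact fun m m' h ↦ Nat.eq_of_mul_eq_mul_left (by positivity) (Nat.pow_right_injective le_rfl h)

lemma exists_pow_eq_of_mem_productBlock {a : ℕ} (ha : a ∈ productBlock L k) :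
    ∃ e, a = 2 ^ e ∧ 2 ^ (L * k) ≤ e ∧ e < 2 ^ (L * (k + 1)) := by
  obtain ⟨m, hm, rfl⟩ := mem_image.1 ha
  rw [mem_Ico] at hm
  refine ⟨_, rfl, Nat.le_mul_of_pos_right _ hm.1, ?_⟩
  calc 2 ^ (L * k) * m < 2 ^ (L * k) * 2 ^ L := by gcongr; exact hm.2
    _ = 2 ^ (L * (k + 1)) := by rw [← pow_add, mul_add_one]

lemma pairwise_disjoint_productBlock : Pairwise (Disjoint on productBlock L) := by
  refine (pairwise_disjoint_on _).2 fun j k hjk ↦ disjoint_left.2 fun a haj hak ↦ ?_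
  obtain ⟨e, rfl, -, he⟩ := exists_pow_eq_of_mem_productBlock L j haj
  obtain ⟨e', he', he'k, -⟩ := exists_pow_eq_of_mem_productBlock L k hak
  have hjk' : 2 ^ (L * (j + 1)) ≤ 2 ^ (L * k) := Nat.pow_le_pow_right two_pos (by gcongr; omega)
  have := Nat.pow_right_injective le_rfl he'
  omega

lemma blockGenerator_strictMono : StrictMono (blockGenerator L k) :=
  fun i j hij ↦ Nat.pow_lt_pow_right one_lt_two (Nat.pow_lt_pow_right one_lt_two (by simpa))

lemma FP_blockGenerator_subset : FP (blockGenerator L k) ⊆ productBlock L k := by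
  rintro _ ⟨F, hF, rfl⟩
  have hm : ∑ i ∈ F, 2 ^ (i : ℕ) ∈ Ico 1 (2 ^ L) := by
    obtain ⟨i, hi⟩ := hF
    refine mem_Ico.2 ⟨Nat.one_le_two_pow.trans
      (single_le_sum (f := fun i : Fin L ↦ 2 ^ (i : ℕ)) (fun _ _ ↦ zero_le) hi), ?_⟩
    refine (sum_map F Fin.valEmbedding (2 ^ ·)).symm.trans_lt (Nat.geomSum_lt le_rfl ?_)
    simp
  refine mem_image.2 ⟨_, hm, ?_⟩
  simp only [blockGenerator, prod_pow_eq_pow_sum, mul_sum, pow_add]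

end Blocks

theorem random_finite_product_sets_general {Ω : Type*} [MeasurableSpace Ω]
    (μ : Measure Ω)
    (p : ℝ) (hp : p ∈ Set.Ioo (0 : ℝ) 1)
    (ε : ℕ → Ω → Bool) (hmeas : ∀ n, Measurable (ε n))
    (hindep : iIndepFun ε μ)
    (hbern : ∀ n, μ {ω | ε n ω = true} = ENNReal.ofReal p) :
    ∀ᵐ ω ∂μ, ∀ L : ℕ, 1 ≤ L →
      ∃ x : Fin L → ℕ, StrictMono x ∧ FP x ⊆ {n | ε n ω = true} := by
  have hA : iIndepSet (fun n ↦ {ω | ε n ω = true}) μ :=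
    hindep.iIndepSet_preimage_s1 hmeas (measurableSet_singleton true)
  have hAm : ∀ n, MeasurableSet {ω | ε n ω = true} :=
    fun n ↦ hmeas n (measurableSet_singleton true)
  rw [ae_all_iff]
  intro L
  have hE : ∀ k, μ (⋂ n ∈ productBlock L k, {ω | ε n ω = true}) =
      ENNReal.ofReal p ^ (2 ^ L - 1) := fun k ↦ by
    rw [hA.measure_biInter_eq_pow hbern, card_productBlock]
  have hp0 : ENNReal.ofReal p ^ (2 ^ L - 1) ≠ 0 := pow_ne_zero _ (ENNReal.ofReal_pos.2 hp.1).ne'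
  filter_upwards [ae_frequently_mem_of_iIndepSet
    (fun k ↦ (productBlock L k).measurableSet_biInter fun n _ ↦ hAm n)
    (hA.biInter_of_pairwise_disjoint hAm (pairwise_disjoint_productBlock L)) hp0
    fun k ↦ (hE k).ge] with ω hω _
  obtain ⟨k, hk⟩ := hω.exists
  exact ⟨blockGenerator L k, blockGenerator_strictMono L k,
    (FP_blockGenerator_subset L k).trans fun n hn ↦ Set.mem_iInter₂.1 hk n hn⟩

/-- **Random Finite Product Sets.** For a Bernoulli(`p`) random subset
`A(ω) = {n | ε n ω = true}` of `ℕ`, almost surely, for every `L ≥ 1` there are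
`x₁ < ⋯ < x_L` with `FP(x₁,…,x_L) ⊆ A(ω)`. -/
theorem random_finite_product_sets {Ω : Type*} [MeasurableSpace Ω]
    (μ : Measure Ω) [IsProbabilityMeasure μ]
    (p : ℝ) (hp : p ∈ Set.Ioo (0 : ℝ) 1)
    (ε : ℕ → Ω → Bool) (hmeas : ∀ n, Measurable (ε n))
    (hindep : iIndepFun ε μ)
    (hbern : ∀ n, μ {ω | ε n ω = true} = ENNReal.ofReal p) :
    ∀ᵐ ω ∂μ, ∀ L : ℕ, 1 ≤ L →
      ∃ x : Fin L → ℕ, StrictMono x ∧ FP x ⊆ {n | ε n ω = true} :=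
  random_finite_product_sets_general μ p hp ε hmeas hindep hbern
end

section
/- (Dominated single-term regime.) With the Bernoulli weighted-sum setup, assume that y_{j_k}^2 / (y_{j_k}^2 + R_k) → 1 as k → ∞ (the variance is asymptotically carried by the single largest summand). Then (S_k − μ_k)/σ_k converges in distribution to (B − p)/√(p(1−p)), where B is a Bernoulli(p) random variable; equivalently, the limit law is the two-point distribution taking the value (1−p)/√(p(1−p)) with probability p and the value −p/√(p(1−p)) with probability 1−p. -/
open MeasureTheory ProbabilityTheory Filter Topology
open scoped BoundedContinuousFunction

/-!
Write `X_k = (S_k - μ_k) / σ_k` as `c_k (ε_{j_k} - p) + D_k`, where `c_k = y_{j_k} / σ_k` and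
`D_k = ∑_{j ≠ j_k} (y_j / σ_k) (ε_j - p)`. The dominance hypothesis gives `c_k → 1 / √(p(1-p))`
and `Var D_k = R_k / (y_{j_k}² + R_k) → 0`, so `D_k → 0` in probability by Chebyshev. All the
`ε_{j_k}` have the same Bernoulli law, so Slutsky's theorem gives `X_k → (ε_0 - p) / √(p(1-p))`
in distribution.
-/

section ZeroOne

variable {Ω : Type*} [MeasurableSpace Ω] {μ : Measure Ω} [IsProbabilityMeasure μ] {g : Ω → ℝ}

lemma integral_comp_of_zero_or_one (hg : Measurable g) (h01 : ∀ ω, g ω = 0 ∨ g ω = 1)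
    (F : ℝ → ℝ) :
    ∫ ω, F (g ω) ∂μ = μ.real {ω | g ω = 1} * F 1 + (1 - μ.real {ω | g ω = 1}) * F 0 := by
  have hE : MeasurableSet {ω | g ω = 1} := hg (measurableSet_singleton 1)
  have hF : ∀ ω, F (g ω) = F 0 + (F 1 - F 0) * {ω | g ω = 1}.indicator 1 ω := by
    intro ω
    rcases h01 ω with h | h <;> simp [h]
  simp_rw [hF]
  rw [integral_add (integrable_const _) ((integrable_indicator_iff hE).2
    (integrable_const 1).integrableOn |>.const_mul _), integral_const_mul,
    integral_indicator_one hE]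
  simp only [integral_const, probReal_univ, smul_eq_mul, one_mul]
  ring

lemma integral_of_zero_or_one (hg : Measurable g) (h01 : ∀ ω, g ω = 0 ∨ g ω = 1) :
    μ[g] = μ.real {ω | g ω = 1} := by
  simpa using integral_comp_of_zero_or_one (μ := μ) hg h01 id

lemma memLp_of_zero_or_one (hg : Measurable g) (h01 : ∀ ω, g ω = 0 ∨ g ω = 1) (q : ENNReal) :
    MemLp g q μ :=
  MemLp.of_bound hg.aestronglyMeasurable 1 <| ae_of_all _ fun ω => by
    rcases h01 ω with h | h <;> simp [h]

lemma identDistrib_of_zero_or_one {Ω' : Type*} [MeasurableSpace Ω'] {ν : Measure Ω'}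
    [IsProbabilityMeasure ν] {g' : Ω' → ℝ} (hg : Measurable g) (h01 : ∀ ω, g ω = 0 ∨ g ω = 1)
    (hg' : Measurable g') (h01' : ∀ ω, g' ω = 0 ∨ g' ω = 1)
    (h : μ {ω | g ω = 1} = ν {ω | g' ω = 1}) : IdentDistrib g g' μ ν where
  aemeasurable_fst := hg.aemeasurable
  aemeasurable_snd := hg'.aemeasurable
  map_eq := ext_of_forall_integral_eq_of_IsFiniteMeasure fun f => by
    rw [integral_map hg.aemeasurable f.continuous.aestronglyMeasurable,
      integral_map hg'.aemeasurable f.continuous.aestronglyMeasurable,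
      integral_comp_of_zero_or_one hg h01, integral_comp_of_zero_or_one hg' h01', measureReal_def,
      measureReal_def, h]

lemma variance_of_zero_or_one (hg : Measurable g) (h01 : ∀ ω, g ω = 0 ∨ g ω = 1) :
    Var[g; μ] = μ.real {ω | g ω = 1} * (1 - μ.real {ω | g ω = 1}) := by
  rw [variance_eq_sub (memLp_of_zero_or_one hg h01 2), integral_of_zero_or_one hg h01]
  simp only [Pi.pow_apply]
  rw [integral_comp_of_zero_or_one hg h01 (· ^ 2)]
  ring

end ZeroOne

section WeightedSum

variable {Ω ι κ : Type*} [MeasurableSpace Ω] {μ : Measure Ω} {ξ : ι → Ω → ℝ} {v : ℝ}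

lemma variance_sum_smul (hξ : ∀ i, MemLp (ξ i) 2 μ)
    (hindep : Pairwise fun i j => IndepFun (ξ i) (ξ j) μ) (hvar : ∀ i, Var[ξ i; μ] = v)
    (s : Finset ι) (a : ι → ℝ) :
    Var[∑ i ∈ s, a i • ξ i; μ] = v * ∑ i ∈ s, a i ^ 2 := by
  rw [IndepFun.variance_sum (fun i _ => (hξ i).const_smul (a i))
    (fun i _ j _ hij => (hindep hij).comp (measurable_const_smul (a i))
      (measurable_const_smul (a j)))]
  simp only [variance_smul, hvar, Finset.mul_sum]
  exact Finset.sum_congr rfl fun i _ => mul_comm _ _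

lemma integral_sum_smul (hξ : ∀ i, Integrable (ξ i) μ) (hmean : ∀ i, μ[ξ i] = 0)
    (s : Finset ι) (a : ι → ℝ) : μ[∑ i ∈ s, a i • ξ i] = 0 := by
  simp only [Finset.sum_apply]
  rw [integral_finsetSum s fun i _ => (hξ i).smul (a i)]
  exact Finset.sum_eq_zero fun i _ => by rw [Pi.smul_def, integral_smul, hmean, smul_zero]

lemma tendstoInMeasure_sum_smul [IsProbabilityMeasure μ] (hξ : ∀ i, MemLp (ξ i) 2 μ)
    (hindep : Pairwise fun i j => IndepFun (ξ i) (ξ j) μ) (hmean : ∀ i, μ[ξ i] = 0)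
    (hvar : ∀ i, Var[ξ i; μ] = v) {l : Filter κ} {s : κ → Finset ι} {a : κ → ι → ℝ}
    (ha : Tendsto (fun k => ∑ i ∈ s k, a k i ^ 2) l (𝓝 0)) :
    TendstoInMeasure μ (fun k => ∑ i ∈ s k, a k i • ξ i) l 0 := by
  rw [tendstoInMeasure_iff_norm]
  intro δ hδ
  have hbound : ∀ k, μ {ω | δ ≤ ‖(∑ i ∈ s k, a k i • ξ i) ω - (0 : Ω → ℝ) ω‖}
      ≤ ENNReal.ofReal ((v * ∑ i ∈ s k, a k i ^ 2) / δ ^ 2) := by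
    intro k
    have hL2 : MemLp (∑ i ∈ s k, a k i • ξ i) 2 μ :=
      memLp_finsetSum' _ fun i _ => (hξ i).const_smul (a k i)
    have := meas_ge_le_variance_div_sq hL2 hδ
    simp only [Pi.zero_apply, Real.norm_eq_abs]
    rwa [integral_sum_smul (fun i => (hξ i).integrable one_le_two) hmean,
      variance_sum_smul hξ hindep hvar] at this
  have hlim : Tendsto (fun k => ENNReal.ofReal ((v * ∑ i ∈ s k, a k i ^ 2) / δ ^ 2)) l (𝓝 0) := by
    simpa using ENNReal.tendsto_ofReal (((ha.const_mul v).div_const (δ ^ 2)))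
  exact tendsto_of_tendsto_of_tendsto_of_le_of_le tendsto_const_nhds hlim
    (fun _ => zero_le) hbound

lemma tendstoInMeasure_sum_smul_sub_of_zero_or_one [IsProbabilityMeasure μ] {ε : ι → Ω → ℝ}
    {p : ℝ} (hmeas : ∀ i, Measurable (ε i)) (h01 : ∀ i ω, ε i ω = 0 ∨ ε i ω = 1)
    (hindep : Pairwise fun i j => IndepFun (ε i) (ε j) μ)
    (hp : ∀ i, μ.real {ω | ε i ω = 1} = p) {l : Filter κ} {s : κ → Finset ι}
    {a : κ → ι → ℝ} (ha : Tendsto (fun k => ∑ i ∈ s k, a k i ^ 2) l (𝓝 0)) :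
    TendstoInMeasure μ (fun k => ∑ i ∈ s k, a k i • fun ω => ε i ω - p) l 0 := by
  have hL2 : ∀ i, MemLp (fun ω => ε i ω - p) 2 μ := fun i =>
    (memLp_of_zero_or_one (hmeas i) (h01 i) 2).sub (memLp_const p)
  refine tendstoInMeasure_sum_smul hL2 (v := p * (1 - p))
    (fun i j hij => (hindep hij).comp (measurable_id.sub_const p) (measurable_id.sub_const p))
    (fun i => ?_) (fun i => ?_) ha
  · rw [integral_sub ((memLp_of_zero_or_one (hmeas i) (h01 i) 1).integrable le_rfl)
      (integrable_const p),
      integral_of_zero_or_one (hmeas i) (h01 i), hp]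
    simp
  · rw [variance_sub_const (hmeas i).aestronglyMeasurable,
      variance_of_zero_or_one (hmeas i) (h01 i), hp]

end WeightedSum

lemma MeasureTheory.TendstoInDistribution.tendsto_integral {ι E Ω' : Type*} {Ω : ι → Type*}
    {m : ∀ i, MeasurableSpace (Ω i)} {μ : (i : ι) → Measure (Ω i)} [∀ i, IsProbabilityMeasure (μ i)]
    [MeasurableSpace Ω'] {ν : Measure Ω'} [IsProbabilityMeasure ν]
    [TopologicalSpace E] [MeasurableSpace E] [OpensMeasurableSpace E]
    {X : (i : ι) → Ω i → E} {Z : Ω' → E} {l : Filter ι}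
    (h : TendstoInDistribution X l Z μ ν) (f : E →ᵇ ℝ) :
    Tendsto (fun i => ∫ ω, f (X i ω) ∂μ i) l (𝓝 (∫ ω, f (Z ω) ∂ν)) := by
  have := ProbabilityMeasure.tendsto_iff_forall_integral_tendsto.1 h.tendsto f
  simp only [ProbabilityMeasure.coe_mk] at this
  simpa only [integral_map (h.forall_aemeasurable _) f.continuous.aestronglyMeasurable,
    integral_map h.aemeasurable_limit f.continuous.aestronglyMeasurable] using this

section Slutsky

variable {Ω Ω' : Type*} [MeasurableSpace Ω] [MeasurableSpace Ω'] {μ : Measure Ω}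
  [IsProbabilityMeasure μ] {ν : Measure Ω'} [IsProbabilityMeasure ν]

lemma tendstoInDistribution_mul_add {Y : ℕ → Ω → ℝ} {Y₀ : Ω' → ℝ}
    (hY : ∀ k, IdentDistrib (Y k) Y₀ μ ν) {c : ℕ → ℝ} {c₀ : ℝ} (hc : Tendsto c atTop (𝓝 c₀))
    {D : ℕ → Ω → ℝ} (hD : TendstoInMeasure μ D atTop 0) (hDm : ∀ k, AEMeasurable (D k) μ) :
    TendstoInDistribution (fun k ω => c k * Y k ω + D k ω) atTop (fun ω => c₀ * Y₀ ω)
      (fun _ => μ) ν := by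
  have hYlim : TendstoInDistribution Y atTop Y₀ (fun _ => μ) ν :=
    tendstoInDistribution_of_identDistrib 0 (fun k => (hY 0).trans (hY k).symm) (hY 0)
  have hclim : TendstoInMeasure μ (fun k _ => c k) atTop (fun _ => c₀) :=
    tendstoInMeasure_of_tendsto_ae (fun _ => aestronglyMeasurable_const) (ae_of_all _ fun _ => hc)
  have hcY := hYlim.continuous_comp_prodMk_of_tendstoInMeasure_const
    (g := fun x : ℝ × ℝ => x.2 * x.1) (by fun_prop) hclim (fun _ => aemeasurable_const)
  have := hcY.add_of_tendstoInMeasure_const hD hDm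
  exact this.congr (fun _ => ae_of_all _ fun _ => rfl) (ae_of_all _ fun _ => add_zero _)

lemma tendstoInDistribution_of_tendstoInMeasure_sub_mul {X Y : ℕ → Ω → ℝ} {Y₀ : Ω' → ℝ}
    (hY : ∀ k, IdentDistrib (Y k) Y₀ μ ν) {c : ℕ → ℝ} {c₀ : ℝ} (hc : Tendsto c atTop (𝓝 c₀))
    (hX : ∀ k, AEMeasurable (X k) μ)
    (hXY : TendstoInMeasure μ (fun k ω => X k ω - c k * Y k ω) atTop 0) :
    TendstoInDistribution X atTop (fun ω => c₀ * Y₀ ω) (fun _ => μ) ν :=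
  (tendstoInDistribution_mul_add hY hc hXY
    fun k => (hX k).sub ((hY k).aemeasurable_fst.const_mul _)).congr
    (fun _ => ae_of_all _ fun _ => add_sub_cancel _ _) EventuallyEq.rfl

end Slutsky

section Deterministic

variable {ι : Type*} {l : Filter ι} {u R σ : ι → ℝ} {q : ℝ}

lemma tendsto_sqrt_div_of_tendsto_div_add (hu : ∀ i, 0 ≤ u i)
    (hσ : ∀ᶠ i in l, σ i = √(q * (u i + R i))) (h : Tendsto (fun i => u i / (u i + R i)) l (𝓝 1)) :
    Tendsto (fun i => √(u i) / σ i) l (𝓝 (1 / √q)) := by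
  have hlim := (Real.continuous_sqrt.tendsto _).comp (h.div_const q)
  rw [one_div, Real.sqrt_inv, ← one_div] at hlim
  refine hlim.congr' ?_
  filter_upwards [hσ] with i hσi
  rw [Function.comp_apply, hσi, ← Real.sqrt_div (hu i), div_div, mul_comm]

lemma tendsto_div_sq_of_tendsto_div_add (hq : 0 ≤ q) (hu : ∀ i, 0 ≤ u i) (hR : ∀ i, 0 ≤ R i)
    (hσ : ∀ᶠ i in l, σ i = √(q * (u i + R i))) (h : Tendsto (fun i => u i / (u i + R i)) l (𝓝 1)) :
    Tendsto (fun i => R i / σ i ^ 2) l (𝓝 0) := by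
  have hlim : Tendsto (fun i => (1 - u i / (u i + R i)) / q) l (𝓝 0) := by
    simpa using (h.const_sub 1).div_const q
  refine hlim.congr' ?_
  filter_upwards [hσ, h.eventually_ne one_ne_zero] with i hσi hi
  have hne : u i + R i ≠ 0 := fun h0 => hi (by rw [h0, div_zero])
  rw [hσi, Real.sq_sqrt (mul_nonneg hq (add_nonneg (hu i) (hR i)))]
  field_simp
  ring

end Deterministic

lemma sum_mul_sub_mul_sum_div_sub {ι : Type*} [DecidableEq ι] {s : Finset ι} {j₀ : ι}
    (hj₀ : j₀ ∈ s) (e y : ι → ℝ) (p σ : ℝ) :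
    (∑ j ∈ s, e j * y j - p * ∑ j ∈ s, y j) / σ - y j₀ / σ * (e j₀ - p)
      = ∑ j ∈ s.erase j₀, y j / σ * (e j - p) := by
  have hsum : (∑ j ∈ s, e j * y j - p * ∑ j ∈ s, y j) / σ = ∑ j ∈ s, y j / σ * (e j - p) := by
    rw [Finset.mul_sum, ← Finset.sum_sub_distrib, Finset.sum_div]
    exact Finset.sum_congr rfl fun j _ => by ring
  rw [hsum, ← Finset.add_sum_erase _ _ hj₀, add_sub_cancel_left]

theorem dominated_single_term_regime_general {Ω : Type*} [MeasurableSpace Ω]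
    (μ : Measure Ω) [IsProbabilityMeasure μ]
    (p : ℝ) (hp : p ∈ Set.Ioo (0 : ℝ) 1)
    (ε : ℕ → Ω → ℝ) (hmeas : ∀ j, Measurable (ε j))
    (hindep : iIndepFun ε μ)
    (h01 : ∀ j ω, ε j ω = 0 ∨ ε j ω = 1)
    (hbern : ∀ j, μ {ω | ε j ω = 1} = ENNReal.ofReal p)
    (y : ℕ → ℕ)
    (jk : ℕ → ℕ) (hjk_mem : ∀ k, 1 ≤ k → jk k ∈ Finset.range k)
    (S : ℕ → Ω → ℝ) (hS : ∀ k ω, S k ω = ∑ j ∈ Finset.range k, ε j ω * (y j : ℝ))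
    (μk : ℕ → ℝ) (hμk : ∀ k, μk k = p * ∑ j ∈ Finset.range k, (y j : ℝ))
    (σk : ℕ → ℝ)
    (hσk : ∀ k, σk k = Real.sqrt (p * (1 - p) * ∑ j ∈ Finset.range k, (y j : ℝ) ^ 2))
    (R : ℕ → ℝ) (hR : ∀ k, R k = ∑ j ∈ (Finset.range k).erase (jk k), (y j : ℝ) ^ 2)
    (hdom : Tendsto (fun k => (y (jk k) : ℝ) ^ 2 / ((y (jk k) : ℝ) ^ 2 + R k))
      atTop (nhds 1)) :
    ∀ f : BoundedContinuousFunction ℝ ℝ,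
      Tendsto (fun k => ∫ ω, f ((S k ω - μk k) / σk k) ∂μ) atTop
        (nhds (p * f ((1 - p) / Real.sqrt (p * (1 - p))) +
          (1 - p) * f (-p / Real.sqrt (p * (1 - p))))) := by
  have hpR : ∀ j, μ.real {ω | ε j ω = 1} = p := fun j => by
    rw [measureReal_def, hbern, ENNReal.toReal_ofReal hp.1.le]
  have hσ : ∀ᶠ k in atTop, σk k = √(p * (1 - p) * ((y (jk k) : ℝ) ^ 2 + R k)) := by
    filter_upwards [eventually_ge_atTop 1] with k hk
    rw [hσk, hR, Finset.add_sum_erase _ (fun j => (y j : ℝ) ^ 2) (hjk_mem k hk)]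
  have hc : Tendsto (fun k => (y (jk k) : ℝ) / σk k) atTop (𝓝 (1 / √(p * (1 - p)))) := by
    simpa only [Real.sqrt_sq (Nat.cast_nonneg _)] using
      tendsto_sqrt_div_of_tendsto_div_add (fun k => sq_nonneg _) hσ hdom
  have hweights : Tendsto (fun k => ∑ j ∈ (Finset.range k).erase (jk k), ((y j : ℝ) / σk k) ^ 2)
      atTop (𝓝 0) := by
    simp_rw [div_pow, ← Finset.sum_div, ← hR]
    exact tendsto_div_sq_of_tendsto_div_add (mul_nonneg hp.1.le (sub_nonneg.2 hp.2.le))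
      (fun _ => sq_nonneg _) (fun k => hR k ▸ Finset.sum_nonneg fun _ _ => sq_nonneg _) hσ hdom
  have hD : TendstoInMeasure μ
      (fun k ω => (S k ω - μk k) / σk k - (y (jk k) : ℝ) / σk k * (ε (jk k) ω - p)) atTop 0 := by
    refine .congr' ?_ EventuallyEq.rfl (tendstoInMeasure_sum_smul_sub_of_zero_or_one hmeas h01
      (fun i j hij => hindep.indepFun hij) hpR hweights)
    filter_upwards [eventually_ge_atTop 1] with k hk
    refine ae_of_all _ fun ω => ?_
    simp only [hS, hμk, sum_mul_sub_mul_sum_div_sub (hjk_mem k hk), Finset.sum_apply,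
      Pi.smul_apply, smul_eq_mul]
  have hlaw : ∀ k, IdentDistrib (fun ω => ε (jk k) ω - p) (fun ω => ε 0 ω - p) μ μ := fun k =>
    (identDistrib_of_zero_or_one (hmeas _) (h01 _) (hmeas 0) (h01 0) (by rw [hbern, hbern])).comp
      (measurable_id.sub_const p)
  intro f
  have hlim := (tendstoInDistribution_of_tendstoInMeasure_sub_mul hlaw hc
    (fun k => by simp only [hS]; fun_prop) hD).tendsto_integral f
  rw [integral_comp_of_zero_or_one (hmeas 0) (h01 0) fun x => f (1 / √(p * (1 - p)) * (x - p)),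
    hpR] at hlim
  convert hlim using 5 <;> ring

/-- **Dominated single-term regime.** If the variance is asymptotically carried by the
single largest summand, i.e. `y_{j_k}² / (y_{j_k}² + R_k) → 1`, then the normalized sums
`(S_k − μ_k)/σ_k` converge in distribution to `(B − p)/√(p(1−p))` with `B ~ Bernoulli(p)`,
i.e. to the two-point law taking the value `(1−p)/√(p(1−p))` with probability `p` and
`−p/√(p(1−p))` with probability `1−p`. Convergence in distribution is expressed via
bounded continuous test functions. -/
theorem dominated_single_term_regime {Ω : Type*} [MeasurableSpace Ω]
    (μ : Measure Ω) [IsProbabilityMeasure μ]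
    (p : ℝ) (hp : p ∈ Set.Ioo (0 : ℝ) 1)
    (ε : ℕ → Ω → ℝ) (hmeas : ∀ j, Measurable (ε j))
    (hindep : iIndepFun ε μ)
    (h01 : ∀ j ω, ε j ω = 0 ∨ ε j ω = 1)
    (hbern : ∀ j, μ {ω | ε j ω = 1} = ENNReal.ofReal p)
    (y : ℕ → ℕ) (hyinj : Function.Injective y) (hypos : ∀ j, 0 < y j)
    (jk : ℕ → ℕ) (hjk_mem : ∀ k, 1 ≤ k → jk k ∈ Finset.range k)
    (hjk_max : ∀ k, ∀ j ∈ Finset.range k, (y j : ℝ) ^ 2 ≤ (y (jk k) : ℝ) ^ 2)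
    (S : ℕ → Ω → ℝ) (hS : ∀ k ω, S k ω = ∑ j ∈ Finset.range k, ε j ω * (y j : ℝ))
    (μk : ℕ → ℝ) (hμk : ∀ k, μk k = p * ∑ j ∈ Finset.range k, (y j : ℝ))
    (σk : ℕ → ℝ)
    (hσk : ∀ k, σk k = Real.sqrt (p * (1 - p) * ∑ j ∈ Finset.range k, (y j : ℝ) ^ 2))
    (R : ℕ → ℝ) (hR : ∀ k, R k = ∑ j ∈ (Finset.range k).erase (jk k), (y j : ℝ) ^ 2)
    (hdom : Tendsto (fun k => (y (jk k) : ℝ) ^ 2 / ((y (jk k) : ℝ) ^ 2 + R k))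
      atTop (nhds 1)) :
    ∀ f : BoundedContinuousFunction ℝ ℝ,
      Tendsto (fun k => ∫ ω, f ((S k ω - μk k) / σk k) ∂μ) atTop
        (nhds (p * f ((1 - p) / Real.sqrt (p * (1 - p))) +
          (1 - p) * f (-p / Real.sqrt (p * (1 - p))))) :=
  dominated_single_term_regime_general μ p hp ε hmeas hindep h01 hbern y jk hjk_mem S hS μk hμk σk
    hσk R hR hdom
end

section
/- (Reinsertion of the removed summand.) With the Bernoulli weighted-sum setup, suppose that p(1−p)·R_k → ∞, that max_{1≤j≤k, j≠j_k} y_j^2 / R_k → 0, and additionally that y_{j_k}^2 / R_k → 0 as k → ∞. Then the full centered sums with the trimmed normalization converge to a standard Gaussian: (S_k − μ_k)/σ_k^{trim} converges in distribution to N(0,1). -/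
open MeasureTheory ProbabilityTheory Filter Complex
open scoped Topology BoundedContinuousFunction

/-!
Write `(S_k - μ_k) / σ_k^trim = ∑_{j<k} c_{kj} (ε_j - p)` with `c_{kj} = y_j / σ_k^trim`. The
summands are independent, centred, bounded by `m_k = y_{j_k} / σ_k^trim`, and their variances sum
to `1 + y_{j_k}² / R_k`; the hypothesis `y_{j_k}² / R_k → 0` gives both `m_k → 0` and variance sum
`→ 1`, so reinserting the largest summand costs nothing. For such uniformly small summands each
characteristic function is `1 - t² Var / 2 + O(|t|³ m_k Var)`, so the product of them is close to
`∏ exp (-t² Var / 2) → exp (-t² / 2)`, and Lévy's continuity theorem concludes.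
-/

theorem Finset.norm_prod_sub_prod_le {ι R : Type*} [NormedCommRing R] [NormOneClass R]
    (s : Finset ι) {a b : ι → R} (ha : ∀ i ∈ s, ‖a i‖ ≤ 1) (hb : ∀ i ∈ s, ‖b i‖ ≤ 1) :
    ‖∏ i ∈ s, a i - ∏ i ∈ s, b i‖ ≤ ∑ i ∈ s, ‖a i - b i‖ := by
  classical
  induction s using Finset.induction_on with
  | empty => simp
  | insert i s hi ih =>
    simp only [Finset.forall_mem_insert] at ha hb
    have hprod : ‖∏ j ∈ s, b j‖ ≤ 1 :=
      (Finset.norm_prod_le _ _).trans (Finset.prod_le_one (fun _ _ ↦ norm_nonneg _) hb.2)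
    rw [Finset.prod_insert hi, Finset.prod_insert hi, Finset.sum_insert hi,
      show a i * ∏ j ∈ s, a j - b i * ∏ j ∈ s, b j
        = a i * (∏ j ∈ s, a j - ∏ j ∈ s, b j) + (a i - b i) * ∏ j ∈ s, b j by ring]
    calc _ ≤ ‖a i‖ * ‖∏ j ∈ s, a j - ∏ j ∈ s, b j‖ + ‖a i - b i‖ * ‖∏ j ∈ s, b j‖ :=
          (norm_add_le _ _).trans (add_le_add (norm_mul_le _ _) (norm_mul_le _ _))
      _ ≤ 1 * ∑ j ∈ s, ‖a j - b j‖ + ‖a i - b i‖ * 1 := by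
          gcongr
          · exact ha.1
          · exact ih ha.2 hb.2
      _ = _ := by ring

theorem Complex.norm_exp_sub_one_sub_id_sub_sq_le {x : ℂ} (hx : ‖x‖ ≤ 1) :
    ‖exp x - 1 - x - x ^ 2 / 2‖ ≤ ‖x‖ ^ 3 := by
  have h := exp_bound hx (n := 3) (by norm_num)
  simp only [Finset.sum_range_succ, Finset.sum_range_zero] at h
  norm_num [Nat.factorial] at h
  calc _ = ‖exp x - (1 + x + x ^ 2 / 2)‖ := by ring_nf
    _ ≤ ‖x‖ ^ 3 * (2 / 9) := h
    _ ≤ ‖x‖ ^ 3 := by nlinarith [pow_nonneg (norm_nonneg x) 3]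

lemma norm_charFun_sub_le_of_ae_abs_le {ν : Measure ℝ} [IsProbabilityMeasure ν] {r t : ℝ}
    (hν : ∀ᵐ x ∂ν, |x| ≤ r) (hmean : ∫ x, x ∂ν = 0) (htr : |t| * r ≤ 1) :
    ‖charFun ν t - (1 - t ^ 2 / 2 * ∫ x, x ^ 2 ∂ν)‖ ≤ |t| ^ 3 * r * ∫ x, x ^ 2 ∂ν := by
  have hint1 : Integrable (fun x : ℝ ↦ t * x) ν :=
    (Integrable.of_bound aestronglyMeasurable_id r (by simpa using hν)).const_mul t
  have hint2 : Integrable (fun x : ℝ ↦ x ^ 2) ν := by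
    refine Integrable.of_bound (by fun_prop) (r ^ 2) ?_
    filter_upwards [hν] with x hx
    simpa [abs_pow] using pow_le_pow_left₀ (abs_nonneg x) hx 2
  have hquad : Integrable (fun x : ℝ ↦ 1 - t ^ 2 / 2 * x ^ 2) ν :=
    (integrable_const 1).sub (hint2.const_mul _)
  have hexp : Integrable (fun x : ℝ ↦ cexp (t * x * I)) ν :=
    Integrable.of_bound (by fun_prop) 1 (ae_of_all _ fun x ↦ by
      rw [← ofReal_mul, norm_exp_ofReal_mul_I])
  have hquadC : Integrable (fun x : ℝ ↦ ((1 - t ^ 2 / 2 * x ^ 2 : ℝ) : ℂ)) ν := hquad.ofReal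
  have hlinC : Integrable (fun x : ℝ ↦ ((t * x : ℝ) : ℂ) * I) ν := hint1.ofReal.mul_const I
  have hexp_quad : Integrable
      (fun x : ℝ ↦ cexp (t * x * I) - ((1 - t ^ 2 / 2 * x ^ 2 : ℝ) : ℂ)) ν := hexp.sub hquadC
  have hdiff : charFun ν t - (1 - t ^ 2 / 2 * ∫ x, x ^ 2 ∂ν)
      = ∫ x, (cexp (t * x * I) - 1 - t * x * I - (t * x * I) ^ 2 / 2) ∂ν := calc
    _ = (∫ x, cexp (t * x * I) ∂ν) - (∫ x, ((1 - t ^ 2 / 2 * x ^ 2 : ℝ) : ℂ) ∂ν)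
          - (∫ x, ((t * x : ℝ) : ℂ) * I ∂ν) := by
      rw [charFun_apply_real, integral_complex_ofReal, integral_mul_const, integral_complex_ofReal,
        integral_sub (integrable_const 1) (hint2.const_mul _), integral_const_mul,
        integral_const_mul, hmean]
      simp
    _ = ∫ x, (cexp (t * x * I) - ((1 - t ^ 2 / 2 * x ^ 2 : ℝ) : ℂ) - ((t * x : ℝ) : ℂ) * I) ∂ν := by
      rw [integral_sub hexp_quad hlinC, integral_sub hexp hquadC]
    _ = _ := integral_congr_ae (ae_of_all _ fun x ↦ by push_cast; ring_nf; simp only [I_sq]; ring)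
  rw [hdiff, ← integral_const_mul]
  refine norm_integral_le_of_norm_le (hint2.const_mul _) ?_
  filter_upwards [hν] with x hx
  have hnorm : ‖(t * x * I : ℂ)‖ = |t| * |x| := by simp
  have htx : |t| * |x| ≤ |t| * r := mul_le_mul_of_nonneg_left hx (abs_nonneg t)
  refine (norm_exp_sub_one_sub_id_sub_sq_le (hnorm ▸ htx.trans htr)).trans ?_
  rw [hnorm]
  calc (|t| * |x|) ^ 3 = |t| ^ 3 * |x| * x ^ 2 := by rw [← sq_abs x]; ring
    _ ≤ |t| ^ 3 * r * x ^ 2 := by gcongr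

theorem tendsto_prod_of_norm_sub_one_sub_le {ι : Type*} {s : ℕ → Finset ι} {φ : ℕ → ι → ℂ}
    {a : ℕ → ι → ℝ} {δ e : ℕ → ℝ} {A : ℝ} (hφ : ∀ k, ∀ j ∈ s k, ‖φ k j‖ ≤ 1)
    (ha : ∀ k, ∀ j ∈ s k, 0 ≤ a k j) (haδ : ∀ k, ∀ j ∈ s k, a k j ≤ δ k)
    (hδ : Tendsto δ atTop (𝓝 0)) (he : Tendsto e atTop (𝓝 0))
    (hsum : Tendsto (fun k ↦ ∑ j ∈ s k, a k j) atTop (𝓝 A))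
    (hφa : ∀ᶠ k in atTop, ∀ j ∈ s k, ‖φ k j - (1 - a k j)‖ ≤ e k * a k j) :
    Tendsto (fun k ↦ ∏ j ∈ s k, φ k j) atTop (𝓝 (cexp (-A))) := by
  have hexp : Tendsto (fun k ↦ ∏ j ∈ s k, cexp (-a k j)) atTop (𝓝 (cexp (-A))) := by
    have h : ∀ k, ∏ j ∈ s k, cexp (-a k j) = cexp (-↑(∑ j ∈ s k, a k j)) := fun k ↦ by
      rw [← Complex.exp_sum, ofReal_sum, Finset.sum_neg_distrib]
    simp_rw [h]
    exact (continuous_exp.comp continuous_ofReal.neg).tendsto A |>.comp hsum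
  have hbound : Tendsto (fun k ↦ (e k + δ k) * ∑ j ∈ s k, a k j) atTop (𝓝 0) := by
    simpa using (he.add hδ).mul hsum
  have hclose : Tendsto (fun k ↦ ∏ j ∈ s k, φ k j - ∏ j ∈ s k, cexp (-a k j)) atTop (𝓝 0) := by
    refine squeeze_zero_norm' ?_ hbound
    filter_upwards [hφa, hδ.eventually_le_const one_pos] with k hk hδ1
    refine (Finset.norm_prod_sub_prod_le _ (hφ k) fun j hj ↦ ?_).trans ?_
    · rw [← ofReal_neg, norm_exp_ofReal]
      exact Real.exp_le_one_iff.2 (neg_nonpos.2 (ha k j hj))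
    rw [Finset.mul_sum]
    refine Finset.sum_le_sum fun j hj ↦ ?_
    have hexp_taylor : ‖cexp (-a k j) - 1 - (-a k j)‖ ≤ a k j ^ 2 := by
      have hsmall : ‖-(a k j : ℂ)‖ ≤ 1 := by
        simpa [abs_of_nonneg (ha k j hj)] using (haδ k j hj).trans hδ1
      simpa using norm_exp_sub_one_sub_id_le hsmall
    calc ‖φ k j - cexp (-a k j)‖
        ≤ ‖φ k j - (1 - a k j)‖ + ‖cexp (-a k j) - 1 - (-a k j)‖ := by
          refine (norm_sub_le _ _).trans_eq' ?_; congr 1; ring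
      _ ≤ e k * a k j + δ k * a k j := by
          gcongr
          · exact hk j hj
          · rw [sq] at hexp_taylor
            exact hexp_taylor.trans (mul_le_mul_of_nonneg_right (haδ k j hj) (ha k j hj))
      _ = (e k + δ k) * a k j := by ring
  simpa using hclose.add hexp

theorem tendsto_charFun_map_sum_gaussianReal {Ω ι : Type*} [MeasurableSpace Ω] {μ : Measure Ω}
    [IsProbabilityMeasure μ] {Z : ℕ → ι → Ω → ℝ} {s : ℕ → Finset ι} {m : ℕ → ℝ}
    (hZ : ∀ k j, AEMeasurable (Z k j) μ) (hindep : ∀ k, iIndepFun (Z k) μ)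
    (hmean : ∀ k, ∀ j ∈ s k, ∫ ω, Z k j ω ∂μ = 0)
    (hbdd : ∀ k, ∀ j ∈ s k, ∀ᵐ ω ∂μ, |Z k j ω| ≤ m k) (hm : Tendsto m atTop (𝓝 0))
    (hvar : Tendsto (fun k ↦ ∑ j ∈ s k, ∫ ω, Z k j ω ^ 2 ∂μ) atTop (𝓝 1)) (t : ℝ) :
    Tendsto (fun k ↦ charFun (μ.map fun ω ↦ ∑ j ∈ s k, Z k j ω) t) atTop
      (𝓝 (charFun (gaussianReal 0 1) t)) := by
  have _ (k : ℕ) (j : ι) : IsProbabilityMeasure (μ.map (Z k j)) :=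
    Measure.isProbabilityMeasure_map (hZ k j)
  have hlaw_bdd : ∀ k, ∀ j ∈ s k, ∀ᵐ x ∂(μ.map (Z k j)), |x| ≤ m k := fun k j hj ↦
    (ae_map_iff (hZ k j) (measurableSet_le (by fun_prop) (by fun_prop))).2 (hbdd k j hj)
  have hmoment : ∀ k j (g : ℝ → ℝ), Measurable g →
      ∫ x, g x ∂(μ.map (Z k j)) = ∫ ω, g (Z k j ω) ∂μ := fun k j g hg ↦
    integral_map (hZ k j) hg.aestronglyMeasurable
  have hsq_le : ∀ k, ∀ j ∈ s k, ∫ ω, Z k j ω ^ 2 ∂μ ≤ m k ^ 2 := fun k j hj ↦ by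
    refine (integral_mono_of_nonneg (ae_of_all _ fun _ ↦ sq_nonneg _)
      (integrable_const (m k ^ 2)) ?_).trans_eq (by simp)
    filter_upwards [hbdd k j hj] with ω hω
    exact sq_le_sq' (abs_le.1 hω).1 (abs_le.1 hω).2
  have hgauss : charFun (gaussianReal 0 1) t = cexp (-((t ^ 2 / 2 : ℝ) : ℂ)) := by
    rw [charFun_gaussianReal]; push_cast; ring_nf
  simp_rw [hgauss, ((hindep _).restrict _).charFun_map_fun_finsetSum_eq_prod (fun j _ ↦ hZ _ j),
    Finset.prod_apply]
  refine tendsto_prod_of_norm_sub_one_sub_le (a := fun k j ↦ t ^ 2 / 2 * ∫ ω, Z k j ω ^ 2 ∂μ)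
    (δ := fun k ↦ t ^ 2 / 2 * m k ^ 2) (e := fun k ↦ 2 * |t| * m k)
    (fun k j _ ↦ norm_charFun_le_one (μ := μ.map (Z k j)) t) (fun k j _ ↦ by positivity)
    (fun k j hj ↦ by gcongr; exact hsq_le k j hj) (by simpa using (hm.pow 2).const_mul (t ^ 2 / 2))
    (by simpa using hm.const_mul (2 * |t|))
    (by simpa [Finset.mul_sum] using hvar.const_mul (t ^ 2 / 2)) ?_
  filter_upwards [(hm.const_mul |t|).eventually_le_const (by simp : |t| * 0 < 1)] with k hk j hj
  have h := norm_charFun_sub_le_of_ae_abs_le (hlaw_bdd k j hj)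
    (by simpa using hmoment k j id measurable_id ▸ hmean k j hj) hk
  rw [hmoment k j _ (by fun_prop)] at h
  push_cast
  refine h.trans_eq ?_
  rw [pow_succ, sq_abs]
  ring

lemma tendsto_integral_comp_of_tendsto_charFun {Ω E : Type*} [MeasurableSpace Ω]
    {μ : Measure Ω} [IsProbabilityMeasure μ]
    [NormedAddCommGroup E] [InnerProductSpace ℝ E] [FiniteDimensional ℝ E]
    [MeasurableSpace E] [BorelSpace E]
    {X : ℕ → Ω → E} (hX : ∀ k, AEMeasurable (X k) μ) {ν : Measure E} [IsProbabilityMeasure ν]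
    (h : ∀ t, Tendsto (fun k ↦ charFun (μ.map (X k)) t) atTop (𝓝 (charFun ν t)))
    (f : E →ᵇ ℝ) : Tendsto (fun k ↦ ∫ ω, f (X k ω) ∂μ) atTop (𝓝 (∫ x, f x ∂ν)) := by
  let law : ℕ → ProbabilityMeasure E := fun k ↦
    ⟨μ.map (X k), Measure.isProbabilityMeasure_map (hX k)⟩
  have hlaw : Tendsto law atTop (𝓝 ⟨ν, inferInstance⟩) :=
    ProbabilityMeasure.tendsto_iff_tendsto_charFun.2 h
  refine (ProbabilityMeasure.tendsto_iff_forall_integral_tendsto.1 hlaw f).congr fun k ↦ ?_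
  exact integral_map (hX k) f.continuous.aestronglyMeasurable

section Bernoulli

variable {Ω : Type*} [MeasurableSpace Ω] {μ : Measure Ω} {X : Ω → ℝ} {p : ℝ}

lemma integral_of_zero_or_one_s12 (hX : AEMeasurable X μ) (h01 : ∀ ω, X ω = 0 ∨ X ω = 1)
    (hp : μ {ω | X ω = 1} = ENNReal.ofReal p) (hp0 : 0 ≤ p) : ∫ ω, X ω ∂μ = p := by
  rw [integral_of_ae_eq_zero_or_one hX (ae_of_all _ h01), measureReal_def, hp,
    ENNReal.toReal_ofReal hp0]

lemma abs_sub_le_one_of_zero_or_one {x : ℝ} (hx : x = 0 ∨ x = 1) (hp : p ∈ Set.Icc 0 1) :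
    |x - p| ≤ 1 := by
  rcases hx with rfl | rfl <;> rw [abs_le] <;> constructor <;> linarith [hp.1, hp.2]

variable [IsProbabilityMeasure μ]

lemma integrable_of_zero_or_one (hX : AEMeasurable X μ) (h01 : ∀ ω, X ω = 0 ∨ X ω = 1) :
    Integrable X μ :=
  Integrable.of_bound hX.aestronglyMeasurable 1
    (ae_of_all _ fun ω ↦ by rcases h01 ω with h | h <;> simp [h])

lemma integral_sub_of_zero_or_one (hX : AEMeasurable X μ) (h01 : ∀ ω, X ω = 0 ∨ X ω = 1)
    (hp : μ {ω | X ω = 1} = ENNReal.ofReal p) (hp0 : 0 ≤ p) : ∫ ω, (X ω - p) ∂μ = 0 := by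
  rw [integral_sub (integrable_of_zero_or_one hX h01) (integrable_const p),
    integral_of_zero_or_one_s12 hX h01 hp hp0]
  simp

lemma integral_sub_sq_of_zero_or_one (hX : AEMeasurable X μ) (h01 : ∀ ω, X ω = 0 ∨ X ω = 1)
    (hp : μ {ω | X ω = 1} = ENNReal.ofReal p) (hp0 : 0 ≤ p) :
    ∫ ω, (X ω - p) ^ 2 ∂μ = p * (1 - p) := by
  have hsq : ∀ ω, (X ω - p) ^ 2 = (1 - 2 * p) * (X ω - p) + p * (1 - p) := fun ω ↦ by
    rcases h01 ω with h | h <;> rw [h] <;> ring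
  have hint : Integrable (fun ω ↦ X ω - p) μ :=
    (integrable_of_zero_or_one hX h01).sub (integrable_const p)
  simp_rw [hsq]
  rw [integral_add (hint.const_mul _) (integrable_const _), integral_const_mul,
    integral_sub_of_zero_or_one hX h01 hp hp0]
  simp

end Bernoulli

lemma tendsto_div_sqrt_mul_of_sq_div {a b : ℕ → ℝ} (ha : ∀ k, 0 ≤ a k) (v : ℝ)
    (h : Tendsto (fun k ↦ a k ^ 2 / b k) atTop (𝓝 0)) :
    Tendsto (fun k ↦ a k / √(v * b k)) atTop (𝓝 0) := by
  have hsqrt : ∀ k, a k / √(v * b k) = √(v⁻¹ * (a k ^ 2 / b k)) := fun k ↦ by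
    rw [inv_mul_eq_div, div_div, mul_comm (b k), Real.sqrt_div (sq_nonneg _), Real.sqrt_sq (ha k)]
  simp_rw [hsqrt]
  have h0 := (Real.continuous_sqrt.tendsto _).comp (h.const_mul v⁻¹)
  rwa [mul_zero, Real.sqrt_zero] at h0

lemma tendsto_sum_sq_div_sqrt_of_erase {u : ℕ → ℝ} {jk : ℕ → ℕ} {R : ℕ → ℝ} {v : ℝ}
    (hv : 0 < v) (hjk : ∀ k, 1 ≤ k → jk k ∈ Finset.range k)
    (hR : ∀ k, R k = ∑ j ∈ (Finset.range k).erase (jk k), u j ^ 2)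
    (hvR : Tendsto (fun k ↦ v * R k) atTop atTop)
    (hrem : Tendsto (fun k ↦ u (jk k) ^ 2 / R k) atTop (𝓝 0)) :
    Tendsto (fun k ↦ ∑ j ∈ Finset.range k, (u j / √(v * R k)) ^ 2 * v) atTop (𝓝 1) := by
  have hlim : Tendsto (fun k ↦ 1 + u (jk k) ^ 2 / R k) atTop (𝓝 1) := by
    simpa using hrem.const_add 1
  refine hlim.congr' ?_
  filter_upwards [hvR.eventually_gt_atTop 0, eventually_ge_atTop 1] with k hpos hk
  have hRpos : 0 < R k := pos_of_mul_pos_right hpos hv.le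
  simp_rw [div_pow, Real.sq_sqrt hpos.le, ← Finset.sum_mul, ← Finset.sum_div,
    ← Finset.add_sum_erase _ _ (hjk k hk), ← hR]
  field_simp
  ring

theorem reinsertion_clt_general {Ω : Type*} [MeasurableSpace Ω]
    (μ : Measure Ω) [IsProbabilityMeasure μ]
    (p : ℝ) (hp : p ∈ Set.Ioo (0 : ℝ) 1)
    (ε : ℕ → Ω → ℝ) (hmeas : ∀ j, Measurable (ε j))
    (hindep : iIndepFun ε μ)
    (h01 : ∀ j ω, ε j ω = 0 ∨ ε j ω = 1)
    (hbern : ∀ j, μ {ω | ε j ω = 1} = ENNReal.ofReal p)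
    (y : ℕ → ℕ)
    (jk : ℕ → ℕ) (hjk_mem : ∀ k, 1 ≤ k → jk k ∈ Finset.range k)
    (hjk_max : ∀ k, ∀ j ∈ Finset.range k, (y j : ℝ) ^ 2 ≤ (y (jk k) : ℝ) ^ 2)
    (S : ℕ → Ω → ℝ) (hS : ∀ k ω, S k ω = ∑ j ∈ Finset.range k, ε j ω * (y j : ℝ))
    (μk : ℕ → ℝ) (hμk : ∀ k, μk k = p * ∑ j ∈ Finset.range k, (y j : ℝ))
    (R : ℕ → ℝ) (hR : ∀ k, R k = ∑ j ∈ (Finset.range k).erase (jk k), (y j : ℝ) ^ 2)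
    (σtrim : ℕ → ℝ) (hσtrim : ∀ k, σtrim k = Real.sqrt (p * (1 - p) * R k))
    (hvar : Tendsto (fun k => p * (1 - p) * R k) atTop atTop)
    (hremoved : Tendsto (fun k => (y (jk k) : ℝ) ^ 2 / R k) atTop (nhds 0)) :
    ∀ f : BoundedContinuousFunction ℝ ℝ,
      Tendsto (fun k => ∫ ω, f ((S k ω - μk k) / σtrim k) ∂μ) atTop
        (nhds (∫ x, f x ∂(gaussianReal 0 1))) := by
  let Z : ℕ → ℕ → Ω → ℝ := fun k j ω ↦ y j / σtrim k * (ε j ω - p)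
  have hsum : ∀ k, (fun ω ↦ (S k ω - μk k) / σtrim k) = fun ω ↦ ∑ j ∈ Finset.range k, Z k j ω :=
    fun k ↦ funext fun ω ↦ by
      simp only [Z, hS, hμk, Finset.mul_sum, ← Finset.sum_sub_distrib, Finset.sum_div]
      exact Finset.sum_congr rfl fun j _ ↦ by ring
  have hσ : ∀ k, 0 ≤ σtrim k := fun k ↦ hσtrim k ▸ Real.sqrt_nonneg _
  have hZbdd : ∀ k, ∀ j ∈ Finset.range k, ∀ ω, |Z k j ω| ≤ y (jk k) / σtrim k := by
    intro k j hj ω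
    have hy : (y j : ℝ) ≤ y (jk k) := (sq_le_sq₀ (by positivity) (by positivity)).1 (hjk_max k j hj)
    have hc : 0 ≤ (y j : ℝ) / σtrim k := div_nonneg (Nat.cast_nonneg _) (hσ k)
    rw [abs_mul, abs_of_nonneg hc]
    have hε := abs_sub_le_one_of_zero_or_one (h01 j ω) (Set.Ioo_subset_Icc_self hp)
    exact (mul_le_of_le_one_right hc hε).trans (div_le_div_of_nonneg_right hy (hσ k))
  have hlaw : ∀ j, AEMeasurable (ε j) μ := fun j ↦ (hmeas j).aemeasurable
  intro f
  refine tendsto_integral_comp_of_tendsto_charFun (fun k ↦ by rw [hsum]; fun_prop) (fun t ↦ ?_) f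
  simp_rw [hsum]
  refine tendsto_charFun_map_sum_gaussianReal (Z := Z) (m := fun k ↦ y (jk k) / σtrim k)
    (fun k j ↦ by fun_prop)
    (fun k ↦ hindep.comp (fun j x ↦ y j / σtrim k * (x - p)) fun j ↦ by fun_prop)
    (fun k j _ ↦ by simp [Z, integral_const_mul,
      integral_sub_of_zero_or_one (hlaw j) (h01 j) (hbern j) hp.1.le])
    (fun k j hj ↦ ae_of_all _ (hZbdd k j hj)) ?_ ?_ t
  · simp_rw [hσtrim]
    exact tendsto_div_sqrt_mul_of_sq_div (fun k ↦ by positivity) _ hremoved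
  · simp_rw [Z, mul_pow, integral_const_mul,
      integral_sub_sq_of_zero_or_one (hlaw _) (h01 _) (hbern _) hp.1.le, hσtrim]
    exact tendsto_sum_sq_div_sqrt_of_erase (mul_pos hp.1 (sub_pos.2 hp.2)) hjk_mem hR hvar hremoved

/-- **Reinsertion of the removed summand.** If `p(1−p)·R_k → ∞`,
`max_{j≤k, j≠j_k} y_j² / R_k → 0`, and additionally `y_{j_k}² / R_k → 0`, then the full
centered sums with the trimmed normalization, `(S_k − μ_k)/σ_k^trim`, converge in
distribution to `N(0,1)`. Convergence in distribution is expressed via bounded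
continuous test functions. -/
theorem reinsertion_clt {Ω : Type*} [MeasurableSpace Ω]
    (μ : Measure Ω) [IsProbabilityMeasure μ]
    (p : ℝ) (hp : p ∈ Set.Ioo (0 : ℝ) 1)
    (ε : ℕ → Ω → ℝ) (hmeas : ∀ j, Measurable (ε j))
    (hindep : iIndepFun ε μ)
    (h01 : ∀ j ω, ε j ω = 0 ∨ ε j ω = 1)
    (hbern : ∀ j, μ {ω | ε j ω = 1} = ENNReal.ofReal p)
    (y : ℕ → ℕ) (hyinj : Function.Injective y) (hypos : ∀ j, 0 < y j)
    (jk : ℕ → ℕ) (hjk_mem : ∀ k, 1 ≤ k → jk k ∈ Finset.range k)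
    (hjk_max : ∀ k, ∀ j ∈ Finset.range k, (y j : ℝ) ^ 2 ≤ (y (jk k) : ℝ) ^ 2)
    (S : ℕ → Ω → ℝ) (hS : ∀ k ω, S k ω = ∑ j ∈ Finset.range k, ε j ω * (y j : ℝ))
    (μk : ℕ → ℝ) (hμk : ∀ k, μk k = p * ∑ j ∈ Finset.range k, (y j : ℝ))
    (R : ℕ → ℝ) (hR : ∀ k, R k = ∑ j ∈ (Finset.range k).erase (jk k), (y j : ℝ) ^ 2)
    (σtrim : ℕ → ℝ) (hσtrim : ∀ k, σtrim k = Real.sqrt (p * (1 - p) * R k))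
    (hvar : Tendsto (fun k => p * (1 - p) * R k) atTop atTop)
    (hmax : Tendsto
      (fun k => ((((Finset.range k).erase (jk k)).sup fun j => y j ^ 2 : ℕ) : ℝ) / R k)
      atTop (nhds 0))
    (hremoved : Tendsto (fun k => (y (jk k) : ℝ) ^ 2 / R k) atTop (nhds 0)) :
    ∀ f : BoundedContinuousFunction ℝ ℝ,
      Tendsto (fun k => ∫ ω, f ((S k ω - μk k) / σtrim k) ∂μ) atTop
        (nhds (∫ x, f x ∂(gaussianReal 0 1))) :=
  reinsertion_clt_general μ p hp ε hmeas hindep h01 hbern y jk hjk_mem hjk_max S hS μk hμk R hR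
    σtrim hσtrim hvar hremoved
end

section
/- Fix p ∈ (0,1), let A be a Bernoulli(p) random subset of ℕ, and fix an integer L ≥ 1. Then with probability 1, A contains infinitely many pairwise disjoint finite product sets of length L: almost surely there exists an infinite sequence of L-tuples (x^{(j)}_1 < ⋯ < x^{(j)}_L), j = 1, 2, …, such that the sets FP(x^{(j)}_1,…,x^{(j)}_L) are pairwise disjoint and each is contained in A. -/
/-!
Put `y j := (2 ^ 2 ^ (L j + i))_{i < L}`. Every element of `FP (y j)` is `2 ^ e` where `e` is a
nonempty sum of distinct powers `2 ^ (L j + i)`, `i < L`, hence `e ∈ [2 ^ (L j), 2 ^ (L j + L))`;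
so the sets `FP (y j)` are pairwise disjoint, and each has at most `2 ^ L` elements. Hence the
events `FP (y j) ⊆ A` are independent, each of probability at least `p ^ 2 ^ L > 0`, and by the
second Borel–Cantelli lemma almost surely infinitely many of them occur.
-/

open MeasureTheory ProbabilityTheory

open Finset Filter Function

def FPFinset {L : ℕ} (x : Fin L → ℕ) : Finset ℕ :=
  (univ.filter fun F : Finset (Fin L) => F.Nonempty).image fun F => ∏ i ∈ F, x i

@[simp]
lemma coe_FPFinset {L : ℕ} (x : Fin L → ℕ) : (FPFinset x : Set ℕ) = FP x := by
  ext s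
  simp [FPFinset, FP, eq_comm]

lemma card_FPFinset_le {L : ℕ} (x : Fin L → ℕ) : #(FPFinset x) ≤ 2 ^ L :=
  calc #(FPFinset x) ≤ #{F : Finset (Fin L) | F.Nonempty} := card_image_le
    _ ≤ #(univ : Finset (Finset (Fin L))) := card_filter_le _ _
    _ = 2 ^ L := by simp

def doubleExpTuple (L j : ℕ) : Fin L → ℕ := fun i => 2 ^ 2 ^ (L * j + i)

lemma doubleExpTuple_strictMono (L j : ℕ) : StrictMono (doubleExpTuple L j) := fun _ _ h =>
  Nat.pow_lt_pow_right one_lt_two (Nat.pow_lt_pow_right one_lt_two (by simpa using h))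

lemma FP_doubleExpTuple_subset (L j : ℕ) :
    FP (doubleExpTuple L j) ⊆ (2 ^ ·) '' Set.Ico (2 ^ (L * j)) (2 ^ (L * j + L)) := by
  rintro _ ⟨F, ⟨i₀, hi₀⟩, rfl⟩
  refine ⟨∑ i ∈ F, 2 ^ (L * j + i), ⟨?_, ?_⟩, by simp [doubleExpTuple, prod_pow_eq_pow_sum]⟩
  · exact le_trans (Nat.pow_le_pow_right two_pos (Nat.le_add_right _ (i₀ : ℕ)))
      (single_le_sum (f := fun i : Fin L => 2 ^ (L * j + i)) (fun _ _ => Nat.zero_le _) hi₀)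
  · rw [← sum_image fun a _ b _ h => Fin.ext (by simpa using h)]
    exact Nat.geomSum_lt le_rfl (by simp)

lemma pairwise_disjoint_FP_doubleExpTuple (L : ℕ) :
    Pairwise (Disjoint on fun j => FP (doubleExpTuple L j)) := by
  refine pairwise_disjoint_on _ |>.mpr fun j j' h => ?_
  refine .mono (FP_doubleExpTuple_subset L j) (FP_doubleExpTuple_subset L j') ?_
  rw [Set.disjoint_image_iff (Nat.pow_right_injective le_rfl), Set.Ico_disjoint_Ico]
  have hblock : L * j + L ≤ L * j' := by simpa [mul_add] using Nat.mul_le_mul_left L h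
  have hsep := Nat.pow_le_pow_right two_pos hblock
  simp only [min_le_iff, le_max_iff]
  omega

section BorelCantelli

variable {Ω : Type*} [MeasurableSpace Ω] {μ : Measure Ω}

lemma ProbabilityTheory.iIndepFun.iIndepSet_biInter_preimage {ι κ β : Type*} [MeasurableSpace β]
    {ε : ι → Ω → β} (hε : iIndepFun ε μ) (hmeas : ∀ i, Measurable (ε i)) {S : ι → Set β}
    (hS : ∀ i, MeasurableSet (S i)) {T : κ → Finset ι} (hT : Pairwise (Disjoint on T)) :
    iIndepSet (fun j => ⋂ i ∈ T j, ε i ⁻¹' S i) μ := by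
  classical
  rw [iIndepSet_iff_meas_biInter fun j => (T j).measurableSet_biInter fun i _ => hmeas i (hS i)]
  intro s
  rw [← set_biInter_biUnion, hε.measure_inter_preimage_eq_mul _ fun i _ => hS i,
    prod_biUnion (hT.set_pairwise _)]
  simp only [hε.measure_inter_preimage_eq_mul _ fun i _ => hS i]

lemma ae_frequently_mem_of_iIndepSet_s16 [IsProbabilityMeasure μ] {E : ℕ → Set Ω}
    (hE : ∀ j, MeasurableSet (E j)) (hind : iIndepSet E μ) {c : ENNReal} (hc : c ≠ 0)
    (hle : ∀ j, c ≤ μ (E j)) : ∀ᵐ ω ∂μ, ∃ᶠ j in atTop, ω ∈ E j := by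
  have hsum : ∑' j, μ (E j) = ⊤ := top_le_iff.mp <|
    (ENNReal.tsum_const_eq_top_of_ne_zero hc).symm.le.trans (ENNReal.tsum_le_tsum hle)
  have hlimsup : limsup E atTop ∈ ae μ := (mem_ae_iff_prob_eq_one
    (MeasurableSet.measurableSet_limsup hE)).mpr (measure_limsup_eq_one hE hind hsum)
  exact Filter.mem_of_superset hlimsup fun _ => mem_limsup_iff_frequently_mem.mp

end BorelCantelli

theorem infinitely_many_disjoint_FP_sets_general {Ω : Type*} [MeasurableSpace Ω]
    (μ : Measure Ω) [IsProbabilityMeasure μ]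
    (p : ℝ) (hp : p ∈ Set.Ioo (0 : ℝ) 1)
    (ε : ℕ → Ω → Bool) (hmeas : ∀ n, Measurable (ε n))
    (hindep : iIndepFun ε μ)
    (hbern : ∀ n, μ {ω | ε n ω = true} = ENNReal.ofReal p)
    (L : ℕ) :
    ∀ᵐ ω ∂μ, ∃ x : ℕ → (Fin L → ℕ),
      (∀ j, StrictMono (x j)) ∧
      (∀ j, FP (x j) ⊆ {n | ε n ω = true}) ∧
      Pairwise fun j j' => Disjoint (FP (x j)) (FP (x j')) := by
  have hB : ∀ n, μ (ε n ⁻¹' {true}) = ENNReal.ofReal p := hbern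
  set E : ℕ → Set Ω := fun j => ⋂ n ∈ FPFinset (doubleExpTuple L j), ε n ⁻¹' {true}
  have hE : ∀ j, MeasurableSet (E j) := fun j =>
    (FPFinset _).measurableSet_biInter fun n _ => hmeas n (measurableSet_singleton true)
  have hind : iIndepSet E μ := hindep.iIndepSet_biInter_preimage hmeas
    (fun _ => measurableSet_singleton true) fun j j' h => by
      simpa [← disjoint_coe] using pairwise_disjoint_FP_doubleExpTuple L h
  have hprob : ∀ j, ENNReal.ofReal p ^ 2 ^ L ≤ μ (E j) := fun j => by
    rw [hindep.measure_inter_preimage_eq_mul _ fun _ _ => measurableSet_singleton true,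
      prod_congr rfl fun n _ => hB n, prod_const]
    exact pow_le_pow_of_le_one zero_le (ENNReal.ofReal_le_one.2 hp.2.le) (card_FPFinset_le _)
  filter_upwards [ae_frequently_mem_of_iIndepSet_s16 hE hind (by simp [hp.1]) hprob] with ω hω
  rw [Nat.frequently_atTop_iff_infinite] at hω
  refine ⟨fun k => doubleExpTuple L (Nat.nth (fun j => ω ∈ E j) k),
    fun k => doubleExpTuple_strictMono _ _, fun k n hn => ?_,
    (pairwise_disjoint_FP_doubleExpTuple L).comp_of_injective (Nat.nth_injective hω)⟩
  rw [← coe_FPFinset] at hn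
  exact Set.mem_iInter₂.mp (Nat.nth_mem_of_infinite hω k) n hn

/-- For a Bernoulli(`p`) random subset `A(ω) = {n | ε n ω = true}` of `ℕ` and fixed
`L ≥ 1`, almost surely there is an infinite sequence of increasing `L`-tuples whose
finite product sets are pairwise disjoint and all contained in `A(ω)`. -/
theorem infinitely_many_disjoint_FP_sets {Ω : Type*} [MeasurableSpace Ω]
    (μ : Measure Ω) [IsProbabilityMeasure μ]
    (p : ℝ) (hp : p ∈ Set.Ioo (0 : ℝ) 1)
    (ε : ℕ → Ω → Bool) (hmeas : ∀ n, Measurable (ε n))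
    (hindep : iIndepFun ε μ)
    (hbern : ∀ n, μ {ω | ε n ω = true} = ENNReal.ofReal p)
    (L : ℕ) (hL : 1 ≤ L) :
    ∀ᵐ ω ∂μ, ∃ x : ℕ → (Fin L → ℕ),
      (∀ j, StrictMono (x j)) ∧
      (∀ j, FP (x j) ⊆ {n | ε n ω = true}) ∧
      Pairwise fun j j' => Disjoint (FP (x j)) (FP (x j')) :=
  infinitely_many_disjoint_FP_sets_general μ p hp ε hmeas hindep hbern L
end

section
/- Fix p ∈ (0,1) and let A be a Bernoulli(p) random subset of ℕ. Then with probability 1 the following holds: for every M > 0 and every integer L ≥ 1, there exist natural numbers x_1 < ⋯ < x_L such that FS(x_1,…,x_L) ⊆ A and every element of FS(x_1,…,x_L) is greater than M. -/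
open MeasureTheory ProbabilityTheory Filter Finset Function

/-!
Fix `L` and put `N = 2 ^ L + 1`. The finite sums of `N ^ k, 2 N ^ k, …, 2 ^ (L - 1) N ^ k` are
the numbers `N ^ k t` with `1 ≤ t < 2 ^ L`, so they all lie in `A` as soon as `A` contains the
block `{N ^ k t | 1 ≤ t < N}`. Distinct `k` give disjoint blocks of the same size `N - 1`, so the
events "block `k` lies in `A`" are independent with the common probability `p ^ (N - 1) > 0`.
By the second Borel–Cantelli lemma almost surely infinitely many blocks, hence blocks of
arbitrarily large elements, lie in `A`; a countable intersection over `L` finishes the proof.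
-/

lemma mem_FS_mul_two_pow {L a s : ℕ} (hs : s ∈ FS (fun i : Fin L => a * 2 ^ (i : ℕ))) :
    ∃ t ∈ Ico 1 (2 ^ L), s = a * t := by
  obtain ⟨F, ⟨i, hi⟩, rfl⟩ := hs
  refine ⟨∑ i ∈ F, 2 ^ (i : ℕ), mem_Ico.2 ⟨?_, ?_⟩, (mul_sum ..).symm⟩
  · exact Nat.one_le_two_pow.trans
      (single_le_sum (f := fun i : Fin L => 2 ^ (i : ℕ)) (fun _ _ => Nat.zero_le _) hi)
  · simpa using Nat.geomSum_lt (s := F.map Fin.valEmbedding) (n := L) le_rfl (by simp)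

/-- The numbers whose base-`N` expansion has a single nonzero digit, in position `k`. -/
def singleDigitBlock (N k : ℕ) : Finset ℕ :=
  (Ico 1 N).image (N ^ k * ·)

lemma card_singleDigitBlock {N : ℕ} (hN : 0 < N) (k : ℕ) :
    #(singleDigitBlock N k) = N - 1 := by
  rw [singleDigitBlock, card_image_of_injective _ (mul_right_injective₀ (pow_ne_zero k hN.ne')),
    Nat.card_Ico]

lemma log_eq_of_mem_singleDigitBlock {N k n : ℕ} (hn : n ∈ singleDigitBlock N k) :
    Nat.log N n = k := by
  obtain ⟨t, ht, rfl⟩ := mem_image.1 hn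
  obtain ⟨ht1, htN⟩ := mem_Ico.1 ht
  have hpos : 0 < N ^ k := pow_pos (by omega) k
  refine Nat.log_eq_of_pow_le_of_lt_pow (Nat.le_mul_of_pos_right _ ht1) ?_
  rw [pow_succ]
  exact Nat.mul_lt_mul_of_pos_left htN hpos

lemma pairwise_disjoint_singleDigitBlock (N : ℕ) : Pairwise (Disjoint on singleDigitBlock N) :=
  fun _ _ hkj => disjoint_left.2 fun _ hk hj =>
    hkj ((log_eq_of_mem_singleDigitBlock hk).symm.trans (log_eq_of_mem_singleDigitBlock hj))

lemma exists_FS_subset_of_singleDigitBlock_subset {A : Set ℕ} {L N k : ℕ} (hN : 2 ^ L ≤ N)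
    (hA : ∀ n ∈ singleDigitBlock N k, n ∈ A) :
    ∃ x : Fin L → ℕ, StrictMono x ∧ FS x ⊆ A ∧ ∀ s ∈ FS x, N ^ k ≤ s := by
  have hpos : 0 < N ^ k := pow_pos (Nat.one_le_two_pow.trans hN) k
  refine ⟨fun i => N ^ k * 2 ^ (i : ℕ), fun i j hij => ?_, fun s hs => ?_, fun s hs => ?_⟩
  · exact Nat.mul_lt_mul_of_pos_left (Nat.pow_lt_pow_right one_lt_two hij) hpos
  · obtain ⟨t, ht, rfl⟩ := mem_FS_mul_two_pow hs
    exact hA _ (mem_image_of_mem _ (Ico_subset_Ico_right hN ht))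
  · obtain ⟨t, ht, rfl⟩ := mem_FS_mul_two_pow hs
    exact Nat.le_mul_of_pos_right _ (mem_Ico.1 ht).1

namespace ProbabilityTheory

variable {Ω ι : Type*} [MeasurableSpace Ω] {μ : Measure Ω} {ε : ι → Ω → Bool}

lemma measurableSet_forall_mem_eq_true (hmeas : ∀ n, Measurable (ε n)) (T : Finset ι) :
    MeasurableSet {ω | ∀ n ∈ T, ε n ω = true} := by
  simp only [Set.ofPred_forall]
  exact T.measurableSet_biInter fun n _ => hmeas n (measurableSet_singleton true)

lemma iIndepFun.measure_forall_mem_eq_true (hindep : iIndepFun ε μ) (T : Finset ι) :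
    μ {ω | ∀ n ∈ T, ε n ω = true} = ∏ n ∈ T, μ {ω | ε n ω = true} := by
  simp only [Set.ofPred_forall]
  exact hindep.meas_biInter (S := T) fun n _ => ⟨{true}, measurableSet_singleton true, rfl⟩

lemma iIndepFun.iIndepSet_forall_mem_eq_true {κ : Type*} (hmeas : ∀ n, Measurable (ε n))
    (hindep : iIndepFun ε μ) {B : κ → Finset ι} (hB : Pairwise (Disjoint on B)) :
    iIndepSet (fun k => {ω | ∀ n ∈ B k, ε n ω = true}) μ := by
  classical
  rw [iIndepSet_iff_meas_biInter fun k => measurableSet_forall_mem_eq_true hmeas (B k)]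
  intro F
  have hinter : ⋂ k ∈ F, {ω | ∀ n ∈ B k, ε n ω = true} =
      {ω | ∀ n ∈ F.biUnion B, ε n ω = true} := by
    ext ω
    simp only [Set.mem_iInter, Set.mem_ofPred_eq, mem_biUnion, forall_exists_index, and_imp]
    exact ⟨fun h n k hk hn => h k hk n hn, fun h k hk n hn => h n k hk hn⟩
  rw [hinter, hindep.measure_forall_mem_eq_true, prod_biUnion (hB.set_pairwise _)]
  simp_rw [hindep.measure_forall_mem_eq_true]

lemma iIndepFun.ae_frequently_forall_mem_eq_true [IsProbabilityMeasure μ]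
    (hmeas : ∀ n, Measurable (ε n)) (hindep : iIndepFun ε μ) {q : ENNReal} (hq : q ≠ 0)
    (hbern : ∀ n, μ {ω | ε n ω = true} = q) {B : ℕ → Finset ι}
    (hB : Pairwise (Disjoint on B)) {c : ℕ} (hc : ∀ k, #(B k) = c) :
    ∀ᵐ ω ∂μ, ∃ᶠ k in atTop, ∀ n ∈ B k, ε n ω = true := by
  have hsum : ∑' k, μ {ω | ∀ n ∈ B k, ε n ω = true} = ⊤ := by
    simp_rw [hindep.measure_forall_mem_eq_true, hbern, prod_const, hc]
    exact ENNReal.tsum_const_eq_top_of_ne_zero (pow_ne_zero c hq)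
  have hmeasB := fun k => measurableSet_forall_mem_eq_true hmeas (B k)
  have hlimsup := measure_limsup_eq_one hmeasB (hindep.iIndepSet_forall_mem_eq_true hmeas hB) hsum
  rw [← prob_compl_eq_zero_iff (MeasurableSet.measurableSet_limsup hmeasB)] at hlimsup
  filter_upwards [measure_eq_zero_iff_ae_notMem.1 hlimsup] with ω hω
  exact mem_limsup_iff_frequently_mem.1 (not_not.1 hω)

end ProbabilityTheory

lemma ae_forall_exists_FS_subset {Ω : Type*} [MeasurableSpace Ω] {μ : Measure Ω}
    [IsProbabilityMeasure μ] {ε : ℕ → Ω → Bool} (hmeas : ∀ n, Measurable (ε n))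
    (hindep : iIndepFun ε μ) {q : ENNReal} (hq : q ≠ 0)
    (hbern : ∀ n, μ {ω | ε n ω = true} = q) (L : ℕ) :
    ∀ᵐ ω ∂μ, ∀ M : ℕ, ∃ x : Fin L → ℕ, StrictMono x ∧ FS x ⊆ {n | ε n ω = true} ∧
      ∀ s ∈ FS x, M < s := by
  set N := 2 ^ L + 1
  have hN : 1 < N := Nat.lt_add_of_pos_left (Nat.two_pow_pos L)
  filter_upwards [hindep.ae_frequently_forall_mem_eq_true hmeas hq hbern
    (pairwise_disjoint_singleDigitBlock N) (card_singleDigitBlock (by omega))] with ω hω M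
  obtain ⟨k, hMk, hk⟩ := ((eventually_ge_atTop M).and_frequently hω).exists
  obtain ⟨x, hx, hFS, hlarge⟩ :=
    exists_FS_subset_of_singleDigitBlock_subset (A := {n | ε n ω = true}) (Nat.le_succ _) hk
  exact ⟨x, hx, hFS, fun s hs => (hMk.trans_lt (Nat.lt_pow_self hN)).trans_le (hlarge s hs)⟩

/-- For a Bernoulli(`p`) random subset `A(ω) = {n | ε n ω = true}` of `ℕ`, almost surely,
for every bound `M` and every `L ≥ 1` there are `x₁ < ⋯ < x_L` with
`FS(x₁,…,x_L) ⊆ A(ω)` and all elements of `FS(x₁,…,x_L)` greater than `M`. -/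
theorem FS_with_large_elements {Ω : Type*} [MeasurableSpace Ω]
    (μ : Measure Ω) [IsProbabilityMeasure μ]
    (p : ℝ) (hp : p ∈ Set.Ioo (0 : ℝ) 1)
    (ε : ℕ → Ω → Bool) (hmeas : ∀ n, Measurable (ε n))
    (hindep : iIndepFun ε μ)
    (hbern : ∀ n, μ {ω | ε n ω = true} = ENNReal.ofReal p) :
    ∀ᵐ ω ∂μ, ∀ M : ℕ, 0 < M → ∀ L : ℕ, 1 ≤ L →
      ∃ x : Fin L → ℕ, StrictMono x ∧ FS x ⊆ {n | ε n ω = true} ∧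
        ∀ s ∈ FS x, M < s := by
  have hq : ENNReal.ofReal p ≠ 0 := (ENNReal.ofReal_pos.2 hp.1).ne'
  filter_upwards [ae_all_iff.2 (ae_forall_exists_FS_subset hmeas hindep hq hbern)]
    with ω hω M _ L _
  exact hω L M
end
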